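/- For all integers m, n, r ≥ 0 and every integer k, in ℤ[q]: c_q^{(r)}(m+n,k) = Σ_{i=0}^{n} Σ_{j=0}^{m} [m+r]_q^{⟨n-i⟩} · qbinom(n,i) · c_q^{(r)}(m,j) · c_q(i,k-j). -/

import Mathlib

/-!
The numbers `c_q^{(r)}(n, k)` satisfy the shifted triangular recurrence
`c_q^{(r)}(n+1, k) = c_q^{(r)}(n, k-1) + [n+r]_q c_q^{(r)}(n, k)`: this follows from the q-Pascal rule
for `qbinom (n+1) i`, the recurrence of `c_q(i+1, k)` and `[i]_q + q^i [r+n-i]_q = [n+r]_q`.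
So `c_q^{(r)}(n, ·)` are the coefficients of `∏_{i<n} (x + [r+i]_q)`, and splitting this product
after `m` factors gives, by induction on `n`, the convolution
`c_q^{(r)}(m+n, k) = ∑_j c_q^{(r)}(m, j) c_q^{(m+r)}(n, k-j)`. Expanding `c_q^{(m+r)}(n, ·)` by its
definition yields the double sum.
-/

open Finset Polynomial

/-- The q-integer [n]_q = 1 + q + ⋯ + q^{n-1} in ℤ[q]. -/
noncomputable def qint (n : ℕ) : Polynomial ℤ := ∑ i ∈ range n, X ^ i

/-- The q-rising factorial [n]_q^{⟨m⟩} = ∏_{i=n}^{n+m-1} [i]_q. -/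
noncomputable def qrise (n m : ℕ) : Polynomial ℤ := ∏ i ∈ range m, qint (n + i)

/-- The q-binomial coefficient. -/
noncomputable def qbinom : ℕ → ℕ → Polynomial ℤ
  | _, 0 => 1
  | 0, _ + 1 => 0
  | n + 1, k + 1 => qbinom n k + X ^ (k + 1) * qbinom n (k + 1)

/-- The q-Stirling numbers of the first kind (natural-number index version). -/
noncomputable def qStirling1Nat : ℕ → ℕ → Polynomial ℤ
  | 0, 0 => 1
  | 0, _ + 1 => 0
  | _ + 1, 0 => 0
  | n + 1, k + 1 => qStirling1Nat n k + qint n * qStirling1Nat n (k + 1)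

/-- The q-Stirling numbers of the first kind, vanishing for negative second index. -/
noncomputable def qStirling1 (n : ℕ) (k : ℤ) : Polynomial ℤ :=
  if 0 ≤ k then qStirling1Nat n k.toNat else 0

/-- The q-r-Stirling numbers of the first kind. -/
noncomputable def qrStirling1 (r n : ℕ) (k : ℤ) : Polynomial ℤ :=
  ∑ i ∈ range (n + 1), qrise r (n - i) * qbinom n i * qStirling1 i k

lemma qint_zero : qint 0 = 0 := by simp [qint]

lemma qint_add (a b : ℕ) : qint (a + b) = qint a + X ^ a * qint b := by
  simp only [qint, sum_range_add, pow_add, mul_sum]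

lemma qrise_zero (n : ℕ) : qrise n 0 = 1 := by simp [qrise]

lemma qrise_succ (n m : ℕ) : qrise n (m + 1) = qrise n m * qint (n + m) :=
  prod_range_succ _ _

lemma qbinom_zero_right (n : ℕ) : qbinom n 0 = 1 := by cases n <;> rfl

lemma qbinom_succ_succ (n k : ℕ) :
    qbinom (n + 1) (k + 1) = qbinom n k + X ^ (k + 1) * qbinom n (k + 1) := rfl

lemma qbinom_eq_zero_of_lt : ∀ {n k : ℕ}, n < k → qbinom n k = 0
  | 0, _ + 1, _ => rfl
  | n + 1, k + 1, h => by
    rw [qbinom_succ_succ, qbinom_eq_zero_of_lt (by omega : n < k),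
      qbinom_eq_zero_of_lt (by omega : n < k + 1), mul_zero, add_zero]

lemma sum_qbinom_succ_mul (n : ℕ) (f : ℕ → ℤ[X]) :
    ∑ i ∈ range (n + 2), qbinom (n + 1) i * f i =
      ∑ i ∈ range (n + 1), qbinom n i * f (i + 1) +
        ∑ i ∈ range (n + 1), X ^ i * qbinom n i * f i := by
  have shifted : ∑ i ∈ range (n + 1), X ^ (i + 1) * qbinom n (i + 1) * f (i + 1) + f 0 =
      ∑ i ∈ range (n + 1), X ^ i * qbinom n i * f i := by
    rw [sum_range_succ, qbinom_eq_zero_of_lt (Nat.lt_succ_self n), sum_range_succ' _ n]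
    simp [qbinom_zero_right]
  rw [sum_range_succ', ← shifted]
  simp only [qbinom_succ_succ, add_mul, sum_add_distrib, qbinom_zero_right]
  ring

lemma qStirling1Nat_eq_zero_of_lt : ∀ {n k : ℕ}, n < k → qStirling1Nat n k = 0
  | 0, _ + 1, _ => rfl
  | n + 1, k + 1, h => by
    rw [qStirling1Nat, qStirling1Nat_eq_zero_of_lt (by omega : n < k),
      qStirling1Nat_eq_zero_of_lt (by omega : n < k + 1), mul_zero, add_zero]

lemma qStirling1_eq_zero {n : ℕ} {k : ℤ} (h : k < 0 ∨ (n : ℤ) < k) : qStirling1 n k = 0 := by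
  unfold qStirling1
  split_ifs with hk
  · exact qStirling1Nat_eq_zero_of_lt (by omega)
  · rfl

lemma qStirling1_zero_left (k : ℤ) : qStirling1 0 k = if k = 0 then 1 else 0 := by
  rcases k with (_ | s) | s <;> rfl

lemma qStirling1_succ (n : ℕ) (k : ℤ) :
    qStirling1 (n + 1) k = qStirling1 n (k - 1) + qint n * qStirling1 n k := by
  rcases lt_or_ge k 0 with hk | hk
  · rw [qStirling1_eq_zero (Or.inl hk), qStirling1_eq_zero (Or.inl (by omega)),
      qStirling1_eq_zero (Or.inl hk), mul_zero, add_zero]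
  lift k to ℕ using hk
  rcases k with _ | k
  · cases n <;> simp [qStirling1, qStirling1Nat, qint_zero]
  · have hpos : (0 : ℤ) ≤ k + 1 := by omega
    simp [qStirling1, qStirling1Nat, hpos]

lemma qrStirling1_zero_left (r : ℕ) (k : ℤ) : qrStirling1 r 0 k = if k = 0 then 1 else 0 := by
  simp [qrStirling1, qrise_zero, qbinom_zero_right, qStirling1_zero_left]

lemma qrStirling1_eq_zero {r n : ℕ} {k : ℤ} (h : k < 0 ∨ (n : ℤ) < k) : qrStirling1 r n k = 0 :=
  sum_eq_zero fun i hi => by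
    rw [qStirling1_eq_zero (by have := mem_range.mp hi; omega), mul_zero]

lemma qrStirling1_succ (r n : ℕ) (k : ℤ) :
    qrStirling1 r (n + 1) k = qrStirling1 r n (k - 1) + qint (n + r) * qrStirling1 r n k := by
  have pascal := sum_qbinom_succ_mul n fun i => qrise r (n + 1 - i) * qStirling1 i k
  simp only [Nat.add_sub_add_right] at pascal
  have regrouped : qrStirling1 r (n + 1) k =
      ∑ i ∈ range (n + 2), qbinom (n + 1) i * (qrise r (n + 1 - i) * qStirling1 i k) :=
    sum_congr rfl fun _ _ => by ring
  rw [regrouped, pascal, qrStirling1, qrStirling1, mul_sum, ← sum_add_distrib, ← sum_add_distrib]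
  refine sum_congr rfl fun i hi => ?_
  have hi : i ≤ n := Nat.lt_succ_iff.mp (mem_range.mp hi)
  have split : qint (n + r) = qint i + X ^ i * qint (r + (n - i)) := by
    rw [← qint_add]; congr 1; omega
  rw [qStirling1_succ, Nat.sub_add_comm hi, qrise_succ, split]
  ring

lemma sum_range_mul_ite_sub_eq_zero {R : Type*} [Semiring R] {m : ℕ} {f : ℤ → R}
    (hf : ∀ k, k < 0 ∨ (m : ℤ) < k → f k = 0) (k : ℤ) :
    ∑ j ∈ range (m + 1), f j * (if k - j = 0 then 1 else 0) = f k := by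
  simp only [mul_ite, mul_one, mul_zero, sub_eq_zero]
  by_cases hk : 0 ≤ k ∧ k ≤ m
  · lift k to ℕ using hk.1
    simp only [Nat.cast_inj, sum_ite_eq, mem_range]
    rw [if_pos (by omega)]
  · rw [hf k (by omega)]
    exact sum_eq_zero fun j hj => if_neg (by have := mem_range.mp hj; omega)

lemma qrStirling1_add_eq_sum_mul (r m n : ℕ) (k : ℤ) :
    qrStirling1 r (m + n) k =
      ∑ j ∈ range (m + 1), qrStirling1 r m j * qrStirling1 (m + r) n (k - j) := by
  induction n generalizing k with
  | zero =>
    simp only [Nat.add_zero, qrStirling1_zero_left]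
    exact (sum_range_mul_ite_sub_eq_zero (fun _ => qrStirling1_eq_zero) k).symm
  | succ n ih =>
    rw [← add_assoc, qrStirling1_succ, ih, ih, mul_sum, ← sum_add_distrib]
    refine sum_congr rfl fun j _ => ?_
    rw [qrStirling1_succ, sub_right_comm, show n + (m + r) = m + n + r by omega]
    ring

theorem qrStirling1_add (m n r : ℕ) (k : ℤ) :
    qrStirling1 r (m + n) k =
      ∑ i ∈ range (n + 1), ∑ j ∈ range (m + 1),
        qrise (m + r) (n - i) * qbinom n i * qrStirling1 r m (j : ℤ) *
          qStirling1 i (k - j) := by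
  rw [qrStirling1_add_eq_sum_mul, sum_comm]
  refine sum_congr rfl fun j _ => ?_
  rw [qrStirling1.eq_def (m + r), mul_sum]
  exact sum_congr rfl fun i _ => by ring
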